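/- arXiv:1304.7718 — 12 statements merged into one kernel-verified Lean document; each statement's English description precedes it below -/
import Mathlib

section
/- In a utility-target auction with ties broken by a fixed total ordering on outcomes, if bidder i obtains utility u by bidding (x, π) against fixed opponent total bids, then bidding (v_i, u)—i.e., truthfully reporting her valuation with utility-target u—also yields her utility exactly u. -/
/-- **Quasi-truthfulness of the utility-target auction.**
In a utility-target auction with ties broken by a fixed total ordering on the
(finite) outcome space, if bidder `i` obtains utility `u` by bidding `(x, πI)`
against fixed opponent total bids `B`, then bidding `(v, u)` — truthfully
reporting her valuation `v` with utility-target `u` — also yields her utility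
exactly `u`. -/
theorem utility_target_quasi_truthful {O : Type*} [Fintype O] [LinearOrder O]
    (v : O → ℝ) (hv : ∀ o, 0 ≤ v o)
    (B : O → ℝ) (hB : ∀ o, 0 ≤ B o)
    (x : O → ℝ) (hx : ∀ o, 0 ≤ x o) (πI : ℝ)
    -- `w` is the outcome chosen under bid `(x, πI)`:
    (w : O)
    (hw1 : ∀ o, B o + max (x o - πI) 0 ≤ B w + max (x w - πI) 0)
    (hw2 : ∀ o, B o + max (x o - πI) 0 = B w + max (x w - πI) 0 → w ≤ o)
    -- `u` is the utility bidder `i` obtains under bid `(x, πI)`: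
    (u : ℝ) (hu : u = v w - max (x w - πI) 0)
    -- `w'` is the outcome chosen under the quasi-truthful bid `(v, u)`:
    (w' : O)
    (hw'1 : ∀ o, B o + max (v o - u) 0 ≤ B w' + max (v w' - u) 0)
    (hw'2 : ∀ o, B o + max (v o - u) 0 = B w' + max (v w' - u) 0 → w' ≤ o) :
    v w' - max (v w' - u) 0 = u := by
  have hm : (0:ℝ) ≤ max (x w - πI) 0 := le_max_right _ _
  have hvwu : v w - u = max (x w - πI) 0 := by rw [hu]; ring
  by_cases h : u ≤ v w'
  · rw [max_eq_left (by linarith)]; ring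
  · push_neg at h
    have h0 : max (v w' - u) 0 = 0 := max_eq_right (by linarith)
    have hmw : max (v w - u) 0 = v w - u := max_eq_left (by linarith)
    have h1 := hw'1 w
    have h2 := hw1 w'
    have h3 : (0:ℝ) ≤ max (x w' - πI) 0 := le_max_right _ _
    rw [h0] at h1
    rw [hmw] at h1
    have heq : B w + max (v w - u) 0 = B w' + max (v w' - u) 0 := by
      rw [h0, hmw]; linarith
    have hle : w' ≤ w := hw'2 w heq
    have heq2 : B w' + max (x w' - πI) 0 = B w + max (x w - πI) 0 := by
      linarith
    have hle2 : w ≤ w' := hw2 w' heq2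
    have hww : w = w' := le_antisymm hle2 hle
    subst hww
    linarith
end

section
/- Cooperatively envy-free bids maximize social welfare: if the bids {b_i} are cooperatively envy-free with winning outcome o*, then Σ_i v_i(o*) ≥ Σ_i v_i(o) for every outcome o. -/
/-- **Cooperatively envy-free bids maximize social welfare.**
If the effective bids `b` are cooperatively envy-free with winning outcome
`ostar` (an outcome maximizing the total bid), then
`∑ i, v i o ≤ ∑ i, v i ostar` for every outcome `o`. -/
theorem cef_maximizes_welfare {I O : Type*} [Fintype I] [Fintype O]
    (v : I → O → ℝ) (hv : ∀ i o, 0 ≤ v i o)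
    (b : I → O → ℝ) (hb : ∀ i o, 0 ≤ b i o)
    (ostar : O)
    (hwin : ∀ o, ∑ i, b i o ≤ ∑ i, b i ostar)
    (hcef : ∀ o, ∑ i, max ((v i o - b i o) - (v i ostar - b i ostar)) 0
      ≤ ∑ i, (b i ostar - b i o)) :
    ∀ o, ∑ i, v i o ≤ ∑ i, v i ostar := by
  intro o
  have key : ∀ i ∈ Finset.univ, v i o - v i ostar ≤
      max ((v i o - b i o) - (v i ostar - b i ostar)) 0 + (b i o - b i ostar) := by
    intro i _
    have := le_max_left ((v i o - b i o) - (v i ostar - b i ostar)) (0 : ℝ)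
    linarith
  have h1 := Finset.sum_le_sum key
  have h2 := hcef o
  simp only [Finset.sum_add_distrib, Finset.sum_sub_distrib] at h1 h2
  linarith
end

section
/- In any cooperatively envy-free outcome, each bidder i pays at least her VCG payment: b_i(o*) ≥ Σ_{j≠i} (v_j(o^i) − v_j(o*)), where o^i maximizes Σ_{j≠i} v_j(o). -/
/-- **CEF revenue dominates VCG.**
In any cooperatively envy-free outcome, each bidder `i` pays at least her VCG
payment: `b i ostar ≥ ∑_{j ≠ i} (v j oi − v j ostar)`, where `oi` maximizes
`∑_{j ≠ i} v j o`. -/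
theorem cef_dominates_vcg {I O : Type*} [Fintype I] [Fintype O] [DecidableEq I]
    (v : I → O → ℝ) (hv : ∀ i o, 0 ≤ v i o)
    (b : I → O → ℝ) (hb : ∀ i o, 0 ≤ b i o)
    (ostar : O)
    (hwin : ∀ o, ∑ i, b i o ≤ ∑ i, b i ostar)
    (hcef : ∀ o, ∑ i, max ((v i o - b i o) - (v i ostar - b i ostar)) 0
      ≤ ∑ i, (b i ostar - b i o))
    (i : I) (oi : O)
    (hoi : ∀ o, ∑ j ∈ Finset.univ.erase i, v j o ≤ ∑ j ∈ Finset.univ.erase i, v j oi) :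
    ∑ j ∈ Finset.univ.erase i, (v j oi - v j ostar) ≤ b i ostar := by
  set s := Finset.univ.erase i with hs
  have h1 : ∑ j ∈ s, ((v j oi - b j oi) - (v j ostar - b j ostar))
      ≤ ∑ j, max ((v j oi - b j oi) - (v j ostar - b j ostar)) 0 := by
    have ha : ∑ j ∈ s, ((v j oi - b j oi) - (v j ostar - b j ostar))
        ≤ ∑ j ∈ s, max ((v j oi - b j oi) - (v j ostar - b j ostar)) 0 :=
      Finset.sum_le_sum fun j _ => le_max_left _ _
    have hb2 : ∑ j ∈ s, max ((v j oi - b j oi) - (v j ostar - b j ostar)) 0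
        ≤ ∑ j, max ((v j oi - b j oi) - (v j ostar - b j ostar)) 0 :=
      Finset.sum_le_sum_of_subset_of_nonneg (Finset.subset_univ _)
        (fun j _ _ => le_max_right _ _)
    exact ha.trans hb2
  have h3 : ∑ j ∈ s, ((v j oi - b j oi) - (v j ostar - b j ostar))
      ≤ ∑ j, (b j ostar - b j oi) := h1.trans (hcef oi)
  have h4 : ∑ j, (b j ostar - b j oi)
      = ∑ j ∈ s, (b j ostar - b j oi) + (b i ostar - b i oi) :=
    (Finset.sum_erase_add _ _ (Finset.mem_univ i)).symm
  have h5 : ∑ j ∈ s, (v j oi - v j ostar)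
      = ∑ j ∈ s, ((v j oi - b j oi) - (v j ostar - b j ostar))
        + ∑ j ∈ s, (b j oi - b j ostar) := by
    rw [← Finset.sum_add_distrib]; apply Finset.sum_congr rfl; intros; ring
  have h6 : ∑ j ∈ s, (b j oi - b j ostar) = - ∑ j ∈ s, (b j ostar - b j oi) := by
    rw [← Finset.sum_neg_distrib]; apply Finset.sum_congr rfl; intros; ring
  have := hb i oi
  linarith
end

section
/- The revenue of any cooperatively envy-free outcome is at least the second-price threat: Σ_i b_i(o*) ≥ max_{o ∈ O} Σ_i max(v_i(o) − v_i(o*), 0). -/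
/-!
Bidder `i`'s gain `v i o - v i o*` exceeds its envy surplus `(v i o - b i o) - (v i o* - b i o*)`
by `b i o - b i o*`, hence is at most that surplus plus `b i o` because `b i o* ≥ 0`.
Summing over bidders and bounding the total surplus by `∑ i, (b i o* - b i o)` (CEF),
the bids `b i o` cancel and only the revenue `∑ i, b i o*` remains.
-/

open Finset

theorem max_sub_zero_le_max_sub_sub_sub_zero_add {α : Type*} [AddCommGroup α] [LinearOrder α]
    [IsOrderedAddMonoid α] {x y c d : α} (hc : 0 ≤ c) (hd : 0 ≤ d) :
    max (x - y) 0 ≤ max ((x - c) - (y - d)) 0 + c := by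
  have hsurplus : (x - c) - (y - d) + c = (x - y) + d := by abel
  apply max_le
  · calc x - y ≤ (x - y) + d := le_add_of_nonneg_right hd
      _ = (x - c) - (y - d) + c := hsurplus.symm
      _ ≤ max ((x - c) - (y - d)) 0 + c := by gcongr; exact le_max_left _ _
  · exact add_nonneg (le_max_right _ _) hc

theorem cef_second_price_threat_general {I O : Type*} [Fintype I]
    (v : I → O → ℝ)
    (b : I → O → ℝ) (hb : ∀ i o, 0 ≤ b i o)
    (ostar : O)
    (hcef : ∀ o, ∑ i, max ((v i o - b i o) - (v i ostar - b i ostar)) 0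
      ≤ ∑ i, (b i ostar - b i o)) :
    ∀ o, ∑ i, max (v i o - v i ostar) 0 ≤ ∑ i, b i ostar := by
  intro o
  calc ∑ i, max (v i o - v i ostar) 0
      ≤ ∑ i, (max ((v i o - b i o) - (v i ostar - b i ostar)) 0 + b i o) :=
        sum_le_sum fun i _ => max_sub_zero_le_max_sub_sub_sub_zero_add (hb i o) (hb i ostar)
    _ = ∑ i, max ((v i o - b i o) - (v i ostar - b i ostar)) 0 + ∑ i, b i o := sum_add_distrib
    _ ≤ ∑ i, (b i ostar - b i o) + ∑ i, b i o := add_le_add_left (hcef o) _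
    _ = ∑ i, b i ostar := by rw [sum_sub_distrib, sub_add_cancel]

/-- **CEF revenue meets the second-price threat.**
The revenue of any cooperatively envy-free outcome is at least the
second-price threat: for every outcome `o`,
`∑ i, max (v i o − v i ostar) 0 ≤ ∑ i, b i ostar`. -/
theorem cef_second_price_threat {I O : Type*} [Fintype I] [Fintype O]
    (v : I → O → ℝ) (hv : ∀ i o, 0 ≤ v i o)
    (b : I → O → ℝ) (hb : ∀ i o, 0 ≤ b i o)
    (ostar : O)
    (hwin : ∀ o, ∑ i, b i o ≤ ∑ i, b i ostar)
    (hcef : ∀ o, ∑ i, max ((v i o - b i o) - (v i ostar - b i ostar)) 0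
      ≤ ∑ i, (b i ostar - b i o)) :
    ∀ o, ∑ i, max (v i o - v i ostar) 0 ≤ ∑ i, b i ostar :=
  cef_second_price_threat_general v b hb ostar hcef
end

section
/- If every bidder is a winner under quasi-truthful bids with utility-target vector π (i.e., each bidder receives exactly the utility π_i she requested), then π lies in the CEF set: the resulting bids are cooperatively envy-free. -/
/-- **All-winners implies cooperative envy-freeness.**
If every bidder is a winner under quasi-truthful bids with utility-target
vector `π` (each bidder receives exactly the utility `π i` she requested at the
winning outcome `ob`), then the induced bids `b i o = max (v i o − π i) 0` are
cooperatively envy-free. -/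
theorem all_winners_implies_cef {I O : Type*} [Fintype I] [Fintype O]
    (v : I → O → ℝ) (hv : ∀ i o, 0 ≤ v i o)
    (π : I → ℝ) (hπ : ∀ i, 0 ≤ π i)
    (ob : O)
    (hwin : ∀ o, ∑ i, max (v i o - π i) 0 ≤ ∑ i, max (v i ob - π i) 0)
    (hall : ∀ i, v i ob - max (v i ob - π i) 0 = π i) :
    ∀ o, ∑ i, max ((v i o - max (v i o - π i) 0) - (v i ob - max (v i ob - π i) 0)) 0
      ≤ ∑ i, (max (v i ob - π i) 0 - max (v i o - π i) 0) := by
  intro o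
  have hL : ∀ i, max ((v i o - max (v i o - π i) 0) - (v i ob - max (v i ob - π i) 0)) 0 = 0 := by
    intro i
    rw [hall i, max_eq_right]
    rcases le_total (v i o) (π i) with h | h
    · rw [max_eq_right (by linarith)]; linarith
    · rw [max_eq_left (by linarith)]; linarith
  calc ∑ i, max ((v i o - max (v i o - π i) 0) - (v i ob - max (v i ob - π i) 0)) 0
      = 0 := by simp [hL]
    _ ≤ ∑ i, (max (v i ob - π i) 0 - max (v i o - π i) 0) := by
        rw [Finset.sum_sub_distrib]; linarith [hwin o]
end

section
/- The CEF set of utility-target vectors is leftward-closed: if the quasi-truthful bids induced by utility-target vector π are cooperatively envy-free, then for any Δ with 0 ≤ Δ ≤ π (coordinatewise), the bids induced by π − Δ are also cooperatively envy-free. -/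
/-- Effective bid of bidder `i` for outcome `o` under quasi-truthful bid
`(v i, π i)` in a utility-target auction. -/
noncomputable def utBid {I O : Type*} (v : I → O → ℝ) (π : I → ℝ) (i : I) (o : O) : ℝ :=
  max (v i o - π i) 0

/-- The utility-target vector `π` is in the CEF set `C`: some outcome `w`
maximizing the total effective bid makes the induced bids cooperatively
envy-free. -/
def InCEF {I O : Type*} [Fintype I] [Fintype O] (v : I → O → ℝ) (π : I → ℝ) : Prop :=
  ∃ w : O, (∀ o, ∑ i, utBid v π i o ≤ ∑ i, utBid v π i w) ∧
    ∀ o, ∑ i, max ((v i o - utBid v π i o) - (v i w - utBid v π i w)) 0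
      ≤ ∑ i, (utBid v π i w - utBid v π i o)

/-- Monotonicity in the utility target of the clipped utility gain. -/
lemma ut_mono (p' p a c : ℝ) (h : p' ≤ p) :
    max ((a - max (a - p') 0) - (c - max (c - p') 0)) 0
      ≤ max ((a - max (a - p) 0) - (c - max (c - p) 0)) 0 := by
  simp only [max_def]
  split_ifs <;> linarith

lemma max_split (x y : ℝ) : max (x - y) 0 = max (y - x) 0 + (x - y) := by
  simp only [max_def]
  split_ifs <;> linarith

/-- **The CEF set is leftward-closed.**
If the quasi-truthful bids induced by `π` are cooperatively envy-free, then for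
any `Δ` with `0 ≤ Δ ≤ π` coordinatewise, the bids induced by `π − Δ` are also
cooperatively envy-free. -/
theorem cef_leftward_closed {I O : Type*} [Fintype I] [Fintype O]
    (v : I → O → ℝ) (hv : ∀ i o, 0 ≤ v i o)
    (π Δ : I → ℝ) (hΔ0 : ∀ i, 0 ≤ Δ i) (hΔπ : ∀ i, Δ i ≤ π i)
    (hπ : InCEF v π) :
    InCEF v (fun i => π i - Δ i) := by
  classical
  obtain ⟨w, hmax, hcef⟩ := hπ
  set π' : I → ℝ := fun i => π i - Δ i with hπ'def
  have hle : ∀ i, π' i ≤ π i := fun i => by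
    have := hΔ0 i; simp [hπ'def]; linarith
  -- Step A : for every o, ∑ max (u_w - u_o) 0 ≤ ∑ (v_w - v_o)  (under π)
  have A : ∀ o : O, ∑ i, max ((v i w - utBid v π i w) - (v i o - utBid v π i o)) 0
      ≤ ∑ i, (v i w - v i o) := by
    intro o
    have h1 := hcef o
    have h2 : ∑ i, max ((v i w - utBid v π i w) - (v i o - utBid v π i o)) 0
        = ∑ i, (max ((v i o - utBid v π i o) - (v i w - utBid v π i w)) 0
            + ((v i w - utBid v π i w) - (v i o - utBid v π i o))) := by
      refine Finset.sum_congr rfl fun i _ => ?_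
      exact max_split _ _
    rw [h2, Finset.sum_add_distrib]
    have h3 : ∑ i, ((v i w - utBid v π i w) - (v i o - utBid v π i o))
        = ∑ i, (v i w - v i o) - ∑ i, (utBid v π i w - utBid v π i o) := by
      rw [← Finset.sum_sub_distrib]
      refine Finset.sum_congr rfl fun i _ => by ring
    rw [h3]
    linarith
  -- Step B : monotone comparison, summed
  have B : ∀ o : O, ∑ i, max ((v i w - utBid v π' i w) - (v i o - utBid v π' i o)) 0
      ≤ ∑ i, max ((v i w - utBid v π i w) - (v i o - utBid v π i o)) 0 := by
    intro o
    refine Finset.sum_le_sum fun i _ => ?_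
    exact ut_mono (π' i) (π i) (v i w) (v i o) (hle i)
  -- Step C : the raw (unclipped) gain is below the clipped one
  have C : ∀ o : O, ∑ i, ((v i w - utBid v π' i w) - (v i o - utBid v π' i o))
      ≤ ∑ i, max ((v i w - utBid v π' i w) - (v i o - utBid v π' i o)) 0 := by
    intro o
    exact Finset.sum_le_sum fun i _ => le_max_left _ _
  refine ⟨w, ?_, ?_⟩
  · intro o
    have hAB := (B o).trans (A o)
    have hC := C o
    have h3 : ∑ i, ((v i w - utBid v π' i w) - (v i o - utBid v π' i o))
        = ∑ i, (v i w - v i o) - (∑ i, utBid v π' i w - ∑ i, utBid v π' i o) := by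
      rw [← Finset.sum_sub_distrib, ← Finset.sum_sub_distrib]
      refine Finset.sum_congr rfl fun i _ => by ring
    rw [h3] at hC
    linarith
  · intro o
    have hAB := (B o).trans (A o)
    have h2 : ∑ i, max ((v i o - utBid v π' i o) - (v i w - utBid v π' i w)) 0
        = ∑ i, max ((v i w - utBid v π' i w) - (v i o - utBid v π' i o)) 0
          - ∑ i, ((v i w - utBid v π' i w) - (v i o - utBid v π' i o)) := by
      rw [← Finset.sum_sub_distrib]
      refine Finset.sum_congr rfl fun i _ => ?_
      have := max_split ((v i w - utBid v π' i w) - (v i o - utBid v π' i o))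
        ((v i o - utBid v π' i o) - (v i w - utBid v π' i w))
      have h' : (v i o - utBid v π' i o) - (v i w - utBid v π' i w)
          = -(((v i w - utBid v π' i w) - (v i o - utBid v π' i o))) := by ring
      rw [max_split]
      ring
    have h3 : ∑ i, ((v i w - utBid v π' i w) - (v i o - utBid v π' i o))
        = ∑ i, (v i w - v i o) - ∑ i, (utBid v π' i w - utBid v π' i o) := by
      rw [← Finset.sum_sub_distrib]
      refine Finset.sum_congr rfl fun i _ => by ring
    rw [h2, h3]
    linarith
end

section
/- Under axioms A1 (losers raise bids, losers never lower, winners never raise) and A2 (any bid change occurring while some loser exists must be a loser raising), starting from utility-target vector π⁰ with bid increment ε, the auction reaches a state in which all bidders are simultaneously winners within at most Σ_i ⌈π⁰_i/ε⌉ bid changes. -/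
/-- **Under A1 and A2, all bidders become winners within `∑ i ⌈π⁰ i / ε⌉` bid
changes.** The repeated utility-target auction has quasi-truthful bids
`b i o = max (v i o − π t i) 0`; at each time `t` the outcome `w t` maximizes
the total bid, and bidder `i` is a winner iff `π t i ≤ v i (w t)`. A raise
decreases a utility-target by `ε` (clamped at the boundary `0`).
A2: while some loser exists, the only possible bid change is a raise by some
loser. A1: while some loser exists, a bid change eventually occurs. Then some
time `T` has all bidders simultaneously winners, with at most
`∑ i, ⌈π 0 i / ε⌉` bid changes before `T`. -/
theorem losers_raise_all_win {I O : Type*} [Fintype I] [Fintype O] [DecidableEq I]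
    (v : I → O → ℝ) (hv : ∀ i o, 0 ≤ v i o)
    (ε : ℝ) (hε : 0 < ε)
    (π : ℕ → I → ℝ) (hπnn : ∀ t i, 0 ≤ π t i)
    (w : ℕ → O)
    (hw : ∀ t o, ∑ i, max (v i o - π t i) 0 ≤ ∑ i, max (v i (w t) - π t i) 0)
    -- A2: while a loser exists, any bid change is an ε-raise by a loser
    (hA2 : ∀ t, (∃ i, v i (w t) < π t i) →
      (π (t + 1) = π t ∨
        ∃ i, v i (w t) < π t i ∧ π (t + 1) i = max (π t i - ε) 0 ∧
          ∀ j, j ≠ i → π (t + 1) j = π t j))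
    -- A1: while a loser exists, a bid change eventually occurs
    (hA1 : ∀ t, (∃ i, v i (w t) < π t i) → ∃ t', t ≤ t' ∧ π (t' + 1) ≠ π t') :
    ∃ T, (∀ i, π T i ≤ v i (w T)) ∧
      (((Finset.range T).filter fun s => π (s + 1) ≠ π s).card : ℤ)
        ≤ ∑ i, ⌈π 0 i / ε⌉ := by
  classical
  set Φ : ℕ → ℤ := fun t => ∑ i, ⌈π t i / ε⌉ with hΦ
  have hterm : ∀ t i, (0:ℤ) ≤ ⌈π t i / ε⌉ := fun t i =>
    Int.ceil_nonneg (div_nonneg (hπnn t i) hε.le)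
  have hΦnn : ∀ t, 0 ≤ Φ t := fun t => Finset.sum_nonneg fun i _ => hterm t i
  have hdec : ∀ t, (∃ i, v i (w t) < π t i) → π (t + 1) ≠ π t → Φ (t + 1) + 1 ≤ Φ t := by
    intro t hl hne
    rcases hA2 t hl with h | ⟨i, hi1, hi2, hi3⟩
    · exact absurd h hne
    have hx : 0 < π t i := lt_of_le_of_lt (hv i (w t)) hi1
    have hkey : ⌈π (t + 1) i / ε⌉ + 1 ≤ ⌈π t i / ε⌉ := by
      rw [hi2]
      rcases le_or_gt (π t i) ε with h | h
      · have hm : max (π t i - ε) 0 = 0 := max_eq_right (by linarith)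
        rw [hm]
        simp only [zero_div, Int.ceil_zero, zero_add]
        exact Int.ceil_pos.mpr (div_pos hx hε)
      · have hm : max (π t i - ε) 0 = π t i - ε := max_eq_left (by linarith)
        rw [hm, sub_div, div_self hε.ne', Int.ceil_sub_one]
        omega
    have hsum : Φ t - Φ (t + 1) = ∑ j, (⌈π t j / ε⌉ - ⌈π (t + 1) j / ε⌉) := by
      rw [hΦ, Finset.sum_sub_distrib]
    have hsingle : ∑ j, (⌈π t j / ε⌉ - ⌈π (t + 1) j / ε⌉)
        = ⌈π t i / ε⌉ - ⌈π (t + 1) i / ε⌉ := by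
      refine Finset.sum_eq_single i (fun j _ hj => by rw [hi3 j hj]; ring)
        (fun h => absurd (Finset.mem_univ i) h)
    have : (1:ℤ) ≤ Φ t - Φ (t + 1) := by rw [hsum, hsingle]; omega
    omega
  have main : ∀ n : ℕ, ∀ t, Φ t ≤ n → ∃ T, t ≤ T ∧ (∀ i, π T i ≤ v i (w T)) ∧
      (((Finset.Ico t T).filter fun s => π (s + 1) ≠ π s).card : ℤ) ≤ Φ t := by
    intro n
    induction n with
    | zero =>
      intro t ht
      have hz : ∀ i, π t i = 0 := by
        intro i
        by_contra h
        have hpos : 0 < π t i := lt_of_le_of_ne (hπnn t i) (Ne.symm h)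
        have h1 : (1:ℤ) ≤ ⌈π t i / ε⌉ := Int.ceil_pos.mpr (div_pos hpos hε)
        have h2 : ⌈π t i / ε⌉ ≤ Φ t :=
          Finset.single_le_sum (fun j _ => hterm t j) (Finset.mem_univ i)
        omega
      refine ⟨t, le_refl t, fun i => ?_, ?_⟩
      · rw [hz i]; exact hv i (w t)
      · simpa [Finset.Ico_self] using hΦnn t
    | succ n ih =>
      intro t ht
      by_cases hwin : ∀ i, π t i ≤ v i (w t)
      · exact ⟨t, le_refl t, hwin, by simpa [Finset.Ico_self] using hΦnn t⟩
      push_neg at hwin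
      have hex : ∃ s, t ≤ s ∧ π (s + 1) ≠ π s := hA1 t hwin
      set t' := Nat.find hex with ht'
      have hspec : t ≤ t' ∧ π (t' + 1) ≠ π t' := Nat.find_spec hex
      have hmin : ∀ s, s < t' → ¬(t ≤ s ∧ π (s + 1) ≠ π s) := fun s hs => Nat.find_min hex hs
      have hconst : ∀ s, t ≤ s → s ≤ t' → π s = π t := by
        intro s hts
        induction s, hts using Nat.le_induction with
        | base => intro _; rfl
        | succ s hs ihs =>
          intro hle
          have hslt : s < t' := hle
          have hnc := hmin s hslt
          push_neg at hnc
          have heq : π (s + 1) = π s := hnc hs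
          rw [heq, ihs (le_of_lt hslt)]
      by_cases hwin' : ∀ i, π t' i ≤ v i (w t')
      · refine ⟨t', hspec.1, hwin', ?_⟩
        have hempty : (Finset.Ico t t').filter (fun s => π (s + 1) ≠ π s) = ∅ := by
          rw [Finset.filter_eq_empty_iff]
          intro s hs
          simp only [Finset.mem_Ico] at hs
          simp only [not_not]
          calc π (s + 1) = π t := hconst (s + 1) (le_trans hs.1 (Nat.le_succ s)) hs.2
            _ = π s := (hconst s hs.1 (le_of_lt hs.2)).symm
        rw [hempty]
        simpa using hΦnn t
      · push_neg at hwin'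
        have hΦeq : Φ t' = Φ t := by rw [hΦ]; simp [hconst t' hspec.1 (le_refl t')]
        have hd := hdec t' hwin' hspec.2
        have hΦ' : Φ (t' + 1) ≤ (n : ℤ) := by
          have : (↑(n + 1) : ℤ) = (n : ℤ) + 1 := by push_cast; ring
          omega
        obtain ⟨T, hT1, hT2, hT3⟩ := ih (t' + 1) hΦ'
        refine ⟨T, le_trans hspec.1 (le_trans (Nat.le_succ t') hT1), hT2, ?_⟩
        have hsplit : Finset.Ico t T = Finset.Ico t (t' + 1) ∪ Finset.Ico (t' + 1) T :=
          (Finset.Ico_union_Ico_eq_Ico (le_trans hspec.1 (Nat.le_succ t')) hT1).symm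
        have hcard1 : ((Finset.Ico t (t' + 1)).filter (fun s => π (s + 1) ≠ π s)).card ≤ 1 := by
          have hsub : (Finset.Ico t (t' + 1)).filter (fun s => π (s + 1) ≠ π s) ⊆ {t'} := by
            intro s hs
            simp only [Finset.mem_filter, Finset.mem_Ico] at hs
            simp only [Finset.mem_singleton]
            by_contra hne
            have hslt : s < t' := lt_of_le_of_ne (Nat.lt_succ_iff.mp hs.1.2) hne
            exact hmin s hslt ⟨hs.1.1, hs.2⟩
          calc _ ≤ ({t'} : Finset ℕ).card := Finset.card_le_card hsub
            _ = 1 := Finset.card_singleton t'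
        have hcardle : ((Finset.Ico t T).filter (fun s => π (s + 1) ≠ π s)).card ≤
            ((Finset.Ico t (t' + 1)).filter (fun s => π (s + 1) ≠ π s)).card +
            ((Finset.Ico (t' + 1) T).filter (fun s => π (s + 1) ≠ π s)).card := by
          rw [hsplit, Finset.filter_union]
          exact Finset.card_union_le _ _
        have : (((Finset.Ico t T).filter (fun s => π (s + 1) ≠ π s)).card : ℤ) ≤
            1 + Φ (t' + 1) := by
          push_cast
          have := hT3
          omega
        omega
  obtain ⟨T, _, hT2, hT3⟩ := main (Φ 0).toNat 0 (by simpa using Int.self_le_toNat (Φ 0))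
  refine ⟨T, hT2, ?_⟩
  rw [Finset.range_eq_Ico]
  exact hT3
end

section
/- In the single-item utility-target auction with two bidders quasi-truthfully bidding (v_i, π_i), the bid vector in which the higher-value bidder targets utility v_1 − v_2 and the lower-value bidder targets 0 is a pure-strategy equilibrium that is cooperatively envy-free, and the winner's payment equals v_2 (the second-price revenue). -/
/-- **Single-item utility-target auction: second-price equilibrium.**
Two bidders with values `v1 ≥ v2 ≥ 0` bid quasi-truthfully; outcome `0` means
bidder `0` wins and outcome `1` means bidder `1` wins (ties favoring bidder
`0`). The bid vector with utility-targets `(v1 − v2, 0)` makes bidder `0` win,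
is a pure-strategy Nash equilibrium, is cooperatively envy-free, and the
winner's payment equals `v2`, the second-price revenue. -/
theorem single_item_utility_target_second_price (v1 v2 : ℝ)
    (h12 : v2 ≤ v1) (h2 : 0 ≤ v2) :
    let val : Fin 2 → Fin 2 → ℝ := fun i o => if i = o then (if i = 0 then v1 else v2) else 0
    let bid : (Fin 2 → ℝ) → Fin 2 → Fin 2 → ℝ := fun π i o => max (val i o - π i) 0
    let total : (Fin 2 → ℝ) → Fin 2 → ℝ := fun π o => ∑ i, bid π i o
    let win : (Fin 2 → ℝ) → Fin 2 := fun π => if total π 0 < total π 1 then 1 else 0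
    let util : Fin 2 → (Fin 2 → ℝ) → ℝ := fun i π => val i (win π) - bid π i (win π)
    let πs : Fin 2 → ℝ := ![v1 - v2, 0]
    -- the higher-value bidder wins
    win πs = 0 ∧
    -- pure-strategy Nash equilibrium
    (∀ i : Fin 2, ∀ t : ℝ, 0 ≤ t → util i (Function.update πs i t) ≤ util i πs) ∧
    -- cooperatively envy-free
    (∀ o : Fin 2,
      ∑ i, max ((val i o - bid πs i o) - (val i (win πs) - bid πs i (win πs))) 0
        ≤ ∑ i, (bid πs i (win πs) - bid πs i o)) ∧
    -- the winner pays the second-price revenue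
    bid πs 0 (win πs) = v2 := by
  intro val bid total win util πs
  have hb00 : bid πs 0 0 = v2 := by
    simp [bid, val, πs]
    first
    | exact h2
    | (constructor <;> intro h <;> linarith)
  have hb01 : bid πs 0 1 = 0 := by
    simp [bid, val, πs]; linarith
  have hb10 : bid πs 1 0 = 0 := by
    simp [bid, val, πs]
  have hb11 : bid πs 1 1 = v2 := by
    simp [bid, val, πs, h2]
  have hwin : win πs = 0 := by
    simp [win, total, Fin.sum_univ_two, hb00, hb01, hb10, hb11]
  refine ⟨hwin, ?_, ?_, ?_⟩
  · rw [Fin.forall_fin_two]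
    constructor <;> intro t ht
    · -- bidder 0 deviates
      set π' := Function.update πs (0 : Fin 2) t with hπ'
      have h0 : π' 0 = t := by simp [hπ', πs]
      have h1 : π' 1 = (0:ℝ) := by simp [hπ', Function.update, πs]
      have hb00' : bid π' 0 0 = max (v1 - t) 0 := by simp [bid, val, h0]
      have hb01' : bid π' 0 1 = 0 := by
        simp [bid, val, h0]; linarith
      have hb10' : bid π' 1 0 = 0 := by simp [bid, val, h1]
      have hb11' : bid π' 1 1 = v2 := by simp [bid, val, h1, h2]
      have htot0 : total π' 0 = max (v1 - t) 0 := by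
        simp [total, Fin.sum_univ_two, hb00', hb10']
      have htot1 : total π' 1 = v2 := by
        simp [total, Fin.sum_univ_two, hb01', hb11']
      have hrhs : util 0 πs = v1 - v2 := by
        simp [util, hwin, hb00, val]
      rw [hrhs]
      by_cases hc : total π' 0 < total π' 1
      · have hw : win π' = 1 := by simp [win, hc]
        simp [util, hw, hb01', val]
        linarith
      · have hw : win π' = 0 := by simp [win, hc]
        have : v2 ≤ max (v1 - t) 0 := by
          rw [← htot0, ← htot1]; linarith [not_lt.mp hc]
        simp [util, hw, hb00', val]
        linarith
    · -- bidder 1 deviates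
      set π' := Function.update πs (1 : Fin 2) t with hπ'
      have h0 : π' 0 = v1 - v2 := by simp [hπ', Function.update, πs]
      have h1 : π' 1 = t := by simp [hπ', πs]
      have hb00' : bid π' 0 0 = v2 := by
        simp [bid, val, h0]
        first
        | exact h2
        | (constructor <;> intro h <;> linarith)
      have hb01' : bid π' 0 1 = 0 := by simp [bid, val, h0]; linarith
      have hb10' : bid π' 1 0 = 0 := by simp [bid, val, h1, ht]
      have hb11' : bid π' 1 1 = max (v2 - t) 0 := by simp [bid, val, h1]
      have hc : ¬ total π' 0 < total π' 1 := by
        simp only [total, Fin.sum_univ_two, hb00', hb01', hb10', hb11']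
        simp
        first
        | exact h2
        | (constructor <;> linarith)
        | linarith [le_max_right (v2-t) (0:ℝ), le_max_left (v2-t) (0:ℝ), max_le (by linarith : v2 - t ≤ v2) h2]
      have hw : win π' = 0 := by simp [win, hc]
      have hrhs : util 1 πs = 0 := by simp [util, hwin, hb10, val]
      rw [hrhs]
      simp [util, hw, hb10', val]
  · rw [Fin.forall_fin_two]
    constructor
    · simp [hwin]
    · rw [hwin]
      simp only [Fin.sum_univ_two, hb00, hb01, hb10, hb11]
      simp [val]
      first
      | linarith
      | (constructor <;> intro h <;> linarith)
  · rw [hwin]; exact hb00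
end

section
/- There exists a utility-target auction instance (with valuations over three outcomes) and quasi-truthful bids forming a Nash equilibrium (no unilateral deviation improves any bidder's utility) that is not cooperatively envy-free: a pair of bidders would jointly profit from raising their bids to make an alternative outcome win, but neither can do so unilaterally. -/
/-!
With quasi-truthful bids `max (v - π) 0`, a bidder with utility-target `π` gets `min v π` at
every outcome. In the instance below bidders 0 and 1 value outcome 1 at 2 and outcome 0 at 1,
bidder 2 values outcome 0 at 2 and bidder 3 values outcome 2 at 1. At targets `(2, 2, 1, 0)`
outcomes 0 and 2 tie with total bid 1 and outcome 0 wins (ties go to the lowest outcome).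
Bidder 2 cannot raise its target without losing to bidder 3, and a single bidder among 0 and 1
who lowers its target to `t` bids `max (2 - t) 0 ≤ 1 + max (1 - t) 0` on outcome 1, so cannot
make it win. Together, at targets `5 / 4`, they bid `3 / 2` on outcome 1 and each gets
`5 / 4 > 1`. The CEF condition fails at outcome 1: moving there costs bidder 2's bid of 1 but
gains bidders 0 and 1 a utility of 1 each.
-/

open Finset Function

section FirstArgmax

variable {O β : Type*} [Fintype O] [Nonempty O] [LinearOrder β]

theorem filter_forall_le_nonempty (f : O → β) :
    ({o | ∀ o', f o' ≤ f o} : Finset O).Nonempty :=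
  let ⟨o, h⟩ := Finite.exists_max f
  ⟨o, by simpa using h⟩

variable [LinearOrder O]

def firstArgmax (f : O → β) : O :=
  ({o | ∀ o', f o' ≤ f o} : Finset O).min' (filter_forall_le_nonempty f)

theorem le_firstArgmax (f : O → β) (o : O) : f o ≤ f (firstArgmax f) := by
  have h := min'_mem _ (filter_forall_le_nonempty f)
  simp only [mem_filter, mem_univ, true_and] at h
  exact h o

theorem firstArgmax_eq {f : O → β} {o : O} (hle : ∀ o', f o' ≤ f o)
    (hlt : ∀ o' < o, f o' < f o) : firstArgmax f = o :=
  le_antisymm (min'_le _ o (by simpa using hle))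
    (not_lt.1 fun h => (hlt _ h).not_ge (le_firstArgmax f o))

end FirstArgmax

theorem sub_max_sub_zero (a t : ℝ) : a - max (a - t) 0 = min a t := by
  rw [← min_sub_sub_left]
  simp [min_comm]

def totalBid {ι O : Type*} [Fintype ι] (v : ι → O → ℝ) (σ : ι → ℝ) (o : O) : ℝ :=
  ∑ i, max (v i o - σ i) 0

namespace NashNotCEF

def valuation : Fin 4 → Fin 3 → ℝ := ![![1, 2, 0], ![1, 2, 0], ![2, 1, 0], ![0, 0, 1]]

def target : Fin 4 → ℝ := ![2, 2, 1, 0]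

noncomputable def sel (σ : Fin 4 → ℝ) : Fin 3 := firstArgmax (totalBid valuation σ)

theorem sel_eq_zero {σ : Fin 4 → ℝ} (h : ∀ o, totalBid valuation σ o ≤ totalBid valuation σ 0) :
    sel σ = 0 :=
  firstArgmax_eq h fun o ho => absurd ho (Fin.not_lt_zero o)

theorem sel_target : sel target = 0 :=
  sel_eq_zero fun o => by
    fin_cases o <;> simp [totalBid, Fin.sum_univ_four, valuation, target]
    norm_num

theorem sel_update_eq_zero {i : Fin 4} {t : ℝ} (ht : 0 ≤ t) (hi : i = 2 → t ≤ 1) :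
    sel (update target i t) = 0 :=
  sel_eq_zero fun o => by
    fin_cases i <;> fin_cases o <;>
      simp [totalBid, Fin.sum_univ_four, valuation, target, update_apply] at hi ⊢ <;> grind

theorem sel_update_two_of_one_lt {t : ℝ} (ht : 1 < t) : sel (update target 2 t) = 2 := by
  refine firstArgmax_eq (fun o => ?_) fun o ho => ?_
  all_goals
    fin_cases o <;> simp [totalBid, Fin.sum_univ_four, valuation, target, update_apply] at * <;>
      grind

theorem sel_update_update : sel (update (update target 0 (5 / 4)) 1 (5 / 4)) = 1 := by
  refine firstArgmax_eq (fun o => ?_) fun o ho => ?_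
  all_goals
    fin_cases o <;> simp [totalBid, Fin.sum_univ_four, valuation, target, update_apply] at * <;>
      norm_num

theorem min_valuation_sel_update_le (i : Fin 4) {t : ℝ} (ht : 0 ≤ t) :
    min (valuation i (sel (update target i t))) t ≤ min (valuation i (sel target)) (target i) := by
  rw [sel_target]
  rcases eq_or_ne i 2 with rfl | hi
  · rcases le_or_gt t 1 with h1t | h1t
    · rw [sel_update_eq_zero ht fun _ => h1t]
      simpa [valuation, target] using h1t
    · rw [sel_update_two_of_one_lt h1t]
      simp [valuation, target]
  · rw [sel_update_eq_zero ht fun h => absurd h hi]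
    fin_cases i <;> simp [valuation, target] at hi ⊢

end NashNotCEF

open NashNotCEF in
/-- **A Nash equilibrium of a utility-target auction need not be cooperatively
envy-free.** There is a utility-target auction instance over three outcomes and
quasi-truthful bids (with an outcome-selection rule `sel` maximizing the total
bid) forming a Nash equilibrium — no unilateral deviation improves any bidder's
utility — that violates the CEF condition at some outcome; moreover a pair of
bidders would jointly profit by raising their bids (lowering their
utility-targets) to make an alternative outcome win. -/
theorem nash_not_cef_exists :
    ∃ (n : ℕ) (v : Fin n → Fin 3 → ℝ) (π : Fin n → ℝ)
      (sel : (Fin n → ℝ) → Fin 3),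
      (∀ i o, 0 ≤ v i o) ∧ (∀ i, 0 ≤ π i) ∧
      -- sel always picks an outcome maximizing the total effective bid
      (∀ (σ : Fin n → ℝ) (o : Fin 3),
        ∑ i, max (v i o - σ i) 0 ≤ ∑ i, max (v i (sel σ) - σ i) 0) ∧
      -- Nash equilibrium: no unilateral deviation improves any bidder
      (∀ (i : Fin n) (t : ℝ), 0 ≤ t →
        v i (sel (Function.update π i t)) -
            max (v i (sel (Function.update π i t)) - t) 0
          ≤ v i (sel π) - max (v i (sel π) - π i) 0) ∧
      -- not cooperatively envy-free
      (∃ o : Fin 3,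
        ∑ i, (max (v i (sel π) - π i) 0 - max (v i o - π i) 0) <
          ∑ i, max ((v i o - max (v i o - π i) 0) -
            (v i (sel π) - max (v i (sel π) - π i) 0)) 0) ∧
      -- a pair of bidders jointly profits by raising their bids
      (∃ (i j : Fin n), i ≠ j ∧ ∃ p q : ℝ,
        0 ≤ p ∧ 0 ≤ q ∧ p ≤ π i ∧ q ≤ π j ∧
        (let σ := Function.update (Function.update π i p) j q
         v i (sel π) - max (v i (sel π) - π i) 0 <
            v i (sel σ) - max (v i (sel σ) - p) 0 ∧
         v j (sel π) - max (v j (sel π) - π j) 0 <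
            v j (sel σ) - max (v j (sel σ) - q) 0)) := by
  refine ⟨4, valuation, target, sel, ?_, ?_, fun σ => le_firstArgmax (totalBid valuation σ),
    ?_, ?_, ?_⟩
  · intro i o
    fin_cases i <;> fin_cases o <;> simp [valuation]
  · intro i
    fin_cases i <;> simp [target]
  · intro i t ht
    simpa only [sub_max_sub_zero] using min_valuation_sel_update_le i ht
  · refine ⟨1, ?_⟩
    simp only [sel_target]
    simp [Fin.sum_univ_four, valuation, target]
  · refine ⟨0, 1, by decide, 5 / 4, 5 / 4, by norm_num, by norm_num, by norm_num [target],
      by norm_num [target], ?_⟩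
    simp only [sub_max_sub_zero, sel_target, sel_update_update]
    norm_num [valuation, target]
end

section
/- In the four-bidder two-outcome instance with v_A = v_B = v_C = (1,0) and v_D = (0,2), the VCG mechanism selects the first outcome and charges every bidder zero, while every cooperatively envy-free outcome selects the first outcome with total revenue at least 2. -/
/-!
Summing the cooperative envy-freeness inequality over all bidders (using `x ≤ max x 0`) makes the
bid terms cancel and shows that a CEF outcome maximizes welfare, so it must be the first outcome.
Keeping only bidder `D`'s term instead gives the second-price threat: the revenue at the winning
outcome is at least `v_D(o₂) - v_D(o₁) = 2`. VCG charges nothing because removing any single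
bidder leaves the first outcome welfare-maximizing.
-/

open Finset

section EnvyFreeness

variable {ι O : Type*} [Fintype ι] {v b : ι → O → ℝ} {ostar : O}

theorem welfare_le_of_envy_bound (o : O)
    (hcef : ∑ i, max ((v i o - b i o) - (v i ostar - b i ostar)) 0
      ≤ ∑ i, (b i ostar - b i o)) :
    ∑ i, v i o ≤ ∑ i, v i ostar := by
  have hsum : ∑ i, ((v i o - b i o) - (v i ostar - b i ostar))
      ≤ ∑ i, max ((v i o - b i o) - (v i ostar - b i ostar)) 0 :=
    sum_le_sum fun i _ => le_max_left _ _
  simp only [sum_sub_distrib] at hsum hcef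
  linarith

theorem valuation_gain_le_revenue_of_envy_bound (hb : ∀ i o, 0 ≤ b i o) (o : O) (i : ι)
    (hcef : ∑ j, max ((v j o - b j o) - (v j ostar - b j ostar)) 0
      ≤ ∑ j, (b j ostar - b j o)) :
    v i o - v i ostar ≤ ∑ j, b j ostar := by
  have henvy : (v i o - b i o) - (v i ostar - b i ostar)
      ≤ ∑ j, max ((v j o - b j o) - (v j ostar - b j ostar)) 0 :=
    (le_max_left _ _).trans
      (single_le_sum (f := fun j => max ((v j o - b j o) - (v j ostar - b j ostar)) 0)
        (fun j _ => le_max_right _ _) (mem_univ i))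
  have hbid : b i o ≤ ∑ j, b j o := single_le_sum (fun j _ => hb j o) (mem_univ i)
  rw [sum_sub_distrib] at hcef
  linarith [hb i ostar]

end EnvyFreeness

/-- **The second-price threat example.** In the four-bidder two-outcome
instance with `v_A = v_B = v_C = (1, 0)` and `v_D = (0, 2)`, the VCG mechanism
selects the first outcome and charges every bidder zero externality, while
every cooperatively envy-free outcome selects the first outcome with total
revenue at least `2`. -/
theorem second_price_threat_example :
    let v : Fin 4 → Fin 2 → ℝ := ![![1, 0], ![1, 0], ![1, 0], ![0, 2]]
    -- VCG (welfare maximization) selects the first outcome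
    (∀ o : Fin 2, ∑ i, v i o ≤ ∑ i, v i 0) ∧
    -- VCG charges every bidder zero
    (∀ i : Fin 4, ∀ oi : Fin 2,
      (∀ o : Fin 2, ∑ j ∈ Finset.univ.erase i, v j o
          ≤ ∑ j ∈ Finset.univ.erase i, v j oi) →
      ∑ j ∈ Finset.univ.erase i, v j oi - ∑ j ∈ Finset.univ.erase i, v j 0 = 0) ∧
    -- every CEF outcome selects the first outcome with revenue at least 2
    (∀ (b : Fin 4 → Fin 2 → ℝ) (ostar : Fin 2),
      (∀ i o, 0 ≤ b i o) →
      (∀ o : Fin 2, ∑ i, b i o ≤ ∑ i, b i ostar) →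
      (∀ o : Fin 2, ∑ i, max ((v i o - b i o) - (v i ostar - b i ostar)) 0
        ≤ ∑ i, (b i ostar - b i o)) →
      ostar = 0 ∧ 2 ≤ ∑ i, b i 0) := by
  intro v
  have hwelfare : ∑ i, v i 1 < ∑ i, v i 0 := by
    simp [v, Fin.sum_univ_four]; norm_num
  have hreduced : ∀ i o, ∑ j ∈ univ.erase i, v j o ≤ ∑ j ∈ univ.erase i, v j 0 := by
    intro i o
    fin_cases i <;> fin_cases o <;> simp [v, sum_erase_eq_sub, Fin.sum_univ_four] <;> norm_num
  refine ⟨fun o => ?_, fun i oi hoi => sub_eq_zero.mpr ((hreduced i oi).antisymm (hoi 0)), ?_⟩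
  · fin_cases o
    · exact le_rfl
    · exact hwelfare.le
  intro b ostar hb _ hcef
  obtain rfl : ostar = 0 := by
    fin_cases ostar
    · rfl
    · exact absurd (welfare_le_of_envy_bound 0 (hcef 0)) hwelfare.not_ge
  refine ⟨rfl, ?_⟩
  simpa [v] using valuation_gain_le_revenue_of_envy_bound hb 1 3 (hcef 1)
end

section
/- In the GFP-style sponsored-search first-price auction with two slots and two bidders where all β_i = 1, α_1 > α_2 > 0, and both bidders' per-click payment must equal their single bid regardless of slot, no pure-strategy Nash equilibrium exists provided v_1, v_2 > 0 and bids range over nonnegative reals. -/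
/-!
A bidder who wins a slot with a strictly higher bid can shade her bid towards the opponent's and
keep the slot while paying less, so in equilibrium the holder of slot 1 bids at most the opponent.
A bidder who holds slot 2 pays nothing extra for it by bidding `0`, so she bids `0`; and if the
opponent also bids `0`, a small positive bid captures slot 1, which is worth more since
`α1 > α2`. Hence the slot-2 bidder bids strictly less than the opponent. Whichever bidder gets
slot 1 under the tie-breaking rule, the two inequalities contradict each other.
-/

def slotUtility (α1 α2 v : ℝ) (win : Bool) (x : ℝ) : ℝ :=
  (if win then α1 else α2) * (v - x)

lemma slotUtility_not (α1 α2 v : ℝ) (b : Bool) (x : ℝ) :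
    slotUtility α1 α2 v (!b) x = slotUtility α2 α1 v b x := by
  cases b <;> rfl

/-- `win x'` says whether the bid `x'` gets slot 1 against the opponent's fixed bid. -/
def IsBestResponse (α1 α2 v : ℝ) (win : ℝ → Bool) (x : ℝ) : Prop :=
  ∀ x', 0 ≤ x' → slotUtility α1 α2 v (win x') x' ≤ slotUtility α1 α2 v (win x) x

lemma exists_pos_lt_mul_sub {α1 α2 v : ℝ} (hα : α2 < α1) (hα1 : 0 < α1) (hv : 0 < v) :
    ∃ d > 0, α2 * v < α1 * (v - d) := by
  -- chosen so that `α1 * (v - d) = (α1 + α2) * v / 2`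
  refine ⟨(α1 - α2) * v / (2 * α1), by positivity, ?_⟩
  have key : α1 * (v - (α1 - α2) * v / (2 * α1)) = (α1 + α2) * v / 2 := by
    field_simp
    ring
  rw [key]
  nlinarith

section BestResponse

variable {α1 α2 v y x : ℝ} {win : ℝ → Bool}

lemma IsBestResponse.le_of_win (hbest : IsBestResponse α1 α2 v win x) (hα1 : 0 < α1)
    (hy : 0 ≤ y) (hwin : ∀ x', y < x' → win x' = true) : x ≤ y := by
  by_contra! hyx
  have hmid : y < (x + y) / 2 := by linarith
  have hdev := hbest ((x + y) / 2) (by linarith)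
  simp only [slotUtility, hwin _ hmid, hwin _ hyx, if_true] at hdev
  nlinarith

lemma IsBestResponse.lt_of_lose (hbest : IsBestResponse α1 α2 v win x) (hα : α2 < α1)
    (hα2 : 0 < α2) (hv : 0 < v) (hx : 0 ≤ x)
    (hwin : ∀ x', y < x' → win x' = true) (hlose : ∀ x', x' < y → win x' = false)
    (hx_lose : win x = false) : x < y := by
  have hxy : x ≤ y := by
    by_contra! hyx
    simp [hwin x hyx] at hx_lose
  have hx0 : x = 0 := by
    by_contra hx0
    have hx_pos : 0 < x := lt_of_le_of_ne hx (Ne.symm hx0)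
    have hdev := hbest 0 le_rfl
    simp only [slotUtility, hlose 0 (hx_pos.trans_le hxy), hx_lose, Bool.false_eq_true,
      if_false] at hdev
    nlinarith
  subst hx0
  refine lt_of_le_of_ne hxy fun hy0 => ?_
  subst hy0
  obtain ⟨d, hd, hgain⟩ := exists_pos_lt_mul_sub hα (hα2.trans hα) hv
  have hdev := hbest d hd.le
  simp only [slotUtility, hwin d hd, hx_lose, Bool.false_eq_true, if_true, if_false,
    sub_zero] at hdev
  linarith

end BestResponse

/-- **The GFP sponsored-search auction has no pure-strategy Nash equilibrium.**
Two slots with click-through rates `α1 > α2 > 0`, two bidders with per-click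
values `v1, v2 > 0` (all `β = 1`). Each bidder submits a single per-click bid
`x_i ≥ 0` and is assigned by `top` (the bidder with the strictly higher bid
gets slot 1; ties broken by the fixed rule `top`), paying her own bid per
click. A bidder in slot `j` gets expected utility `α_j (v_i − x_i)`. There is
no bid pair `(x1, x2)` from which no bidder can strictly improve by a
unilateral deviation. -/
theorem gfp_no_pure_nash (α1 α2 v1 v2 : ℝ)
    (hα : α2 < α1) (hα2 : 0 < α2) (hv1 : 0 < v1) (hv2 : 0 < v2)
    (top : ℝ → ℝ → Bool)
    (htop1 : ∀ x1 x2, x2 < x1 → top x1 x2 = true)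
    (htop2 : ∀ x1 x2, x1 < x2 → top x1 x2 = false) :
    let u1 : ℝ → ℝ → ℝ := fun x1 x2 => (if top x1 x2 then α1 else α2) * (v1 - x1)
    let u2 : ℝ → ℝ → ℝ := fun x1 x2 => (if top x1 x2 then α2 else α1) * (v2 - x2)
    ¬ ∃ x1 x2 : ℝ, 0 ≤ x1 ∧ 0 ≤ x2 ∧
      (∀ x : ℝ, 0 ≤ x → u1 x x2 ≤ u1 x1 x2) ∧
      (∀ x : ℝ, 0 ≤ x → u2 x1 x ≤ u2 x1 x2) := by
  rintro u1 u2 ⟨x1, x2, hx1, hx2, h1, h2⟩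
  have hα1 : 0 < α1 := hα2.trans hα
  have hbest1 : IsBestResponse α1 α2 v1 (top · x2) x1 := h1
  have hbest2 : IsBestResponse α1 α2 v2 (!top x1 ·) x2 := fun x hx => by
    rw [slotUtility_not, slotUtility_not]
    exact h2 x hx
  have hwin2 : ∀ x, x1 < x → (!top x1 x) = true := fun x h => by simp [htop2 _ _ h]
  have hlose2 : ∀ x, x < x1 → (!top x1 x) = false := fun x h => by simp [htop1 _ _ h]
  cases htie : top x1 x2
  · have h12 := hbest1.lt_of_lose hα hα2 hv1 hx1 (htop1 · x2) (htop2 · x2) htie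
    have h21 := hbest2.le_of_win hα1 hx1 hwin2
    linarith
  · have h12 := hbest1.le_of_win hα1 hx2 (htop1 · x2)
    have h21 := hbest2.lt_of_lose hα hα2 hv2 hx2 hwin2 hlose2 (by simp [htie])
    linarith
end

section
/- In a utility-target auction, if all bidders are winners under utility-target vector π and one bidder lowers her bid by ε (increasing her π_i to π_i + ε), then any subsequent utility-target vector π'' reachable by other bidders only raising their bids satisfies π'' ∈ C_ε, i.e., it is within ℓ∞-distance ε of some vector in the CEF set. -/
/-!
All bidders win at a total-bid-maximizing outcome `w` exactly when `π i ≤ v i w` for every `i`;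
then every bidder's utility at `w` is her full target `π i`, which no other outcome can beat, so
the bids are cooperatively envy-free. Lowering some targets keeps every bidder winning at `w`:
the bid at `w` grows by exactly the decrease of the target, and at any other outcome by at most
that much. Hence `ρ = min π'' π` lies in the CEF set, and it differs from `π''` only in
coordinate `k`, by exactly `ε`.
-/

open Finset

section UtilityTarget

variable {I O : Type*} (v : I → O → ℝ)

lemma utBid_eq_sub_of_le {π : I → ℝ} {i : I} {o : O} (h : π i ≤ v i o) :
    utBid v π i o = v i o - π i :=
  max_eq_left (sub_nonneg.mpr h)

lemma sub_utBid_le (π : I → ℝ) (i : I) (o : O) : v i o - utBid v π i o ≤ π i := by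
  unfold utBid
  linarith [le_max_left (v i o - π i) 0]

lemma le_of_sub_utBid_eq {π : I → ℝ} {i : I} {o : O} (h : v i o - utBid v π i o = π i) :
    π i ≤ v i o := by
  by_contra! hlt
  rw [utBid, max_eq_right (by linarith)] at h
  linarith

lemma utBid_le_add_of_le {ρ π : I → ℝ} {i : I} (h : ρ i ≤ π i) (o : O) :
    utBid v ρ i o ≤ utBid v π i o + (π i - ρ i) := by
  unfold utBid
  apply max_le
  · linarith [le_max_left (v i o - π i) 0]
  · linarith [le_max_right (v i o - π i) 0]

variable [Fintype I]

/-- Bidder `i` wins at `w` iff `π i ≤ v i w`, i.e. she obtains her full utility target there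
(`le_of_sub_utBid_eq`). -/
def IsAllWinners (π : I → ℝ) (w : O) : Prop :=
  (∀ o, ∑ i, utBid v π i o ≤ ∑ i, utBid v π i w) ∧ ∀ i, π i ≤ v i w

variable {v}

lemma IsAllWinners.inCEF [Fintype O] {π : I → ℝ} {w : O} (h : IsAllWinners v π w) : InCEF v π := by
  refine ⟨w, h.1, fun o => ?_⟩
  have hsurplus : ∑ i, max ((v i o - utBid v π i o) - (v i w - utBid v π i w)) 0 = 0 := by
    refine sum_eq_zero fun i _ => max_eq_right ?_
    rw [utBid_eq_sub_of_le v (h.2 i)]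
    linarith [sub_utBid_le v π i o]
  rw [hsurplus, sum_sub_distrib]
  linarith [h.1 o]

lemma IsAllWinners.mono {ρ π : I → ℝ} {w : O} (h : IsAllWinners v π w) (hρ : ∀ i, ρ i ≤ π i) :
    IsAllWinners v ρ w := by
  have hw : ∀ i, utBid v ρ i w = utBid v π i w + (π i - ρ i) := fun i => by
    rw [utBid_eq_sub_of_le v ((hρ i).trans (h.2 i)), utBid_eq_sub_of_le v (h.2 i)]
    ring
  refine ⟨fun o => ?_, fun i => (hρ i).trans (h.2 i)⟩
  calc ∑ i, utBid v ρ i o ≤ ∑ i, (utBid v π i o + (π i - ρ i)) :=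
        sum_le_sum fun i _ => utBid_le_add_of_le v (hρ i) o
    _ = ∑ i, utBid v π i o + ∑ i, (π i - ρ i) := sum_add_distrib
    _ ≤ ∑ i, utBid v π i w + ∑ i, (π i - ρ i) := by linarith [h.1 o]
    _ = ∑ i, utBid v ρ i w := by rw [← sum_add_distrib]; exact sum_congr rfl fun i _ => (hw i).symm

end UtilityTarget

theorem lower_then_raise_near_cef_general {I O : Type*} [Fintype I] [Fintype O]
    (v : I → O → ℝ)
    (ε : ℝ) (hε : 0 < ε)
    (π : I → ℝ)
    (ob : O)
    (hwin : ∀ o, ∑ i, utBid v π i o ≤ ∑ i, utBid v π i ob)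
    (hall : ∀ i, v i ob - utBid v π i ob = π i)
    (k : I)
    (π'' : I → ℝ)
    (hk : π'' k = π k + ε)
    (hraise : ∀ j, j ≠ k → π'' j ≤ π j) :
    ∃ ρ : I → ℝ, InCEF v ρ ∧ ∀ i, |π'' i - ρ i| ≤ ε := by
  have hπ_win : IsAllWinners v π ob := ⟨hwin, fun i => le_of_sub_utBid_eq v (hall i)⟩
  refine ⟨fun i => min (π'' i) (π i), (hπ_win.mono fun i => min_le_right _ _).inCEF, fun i => ?_⟩
  show |π'' i - min (π'' i) (π i)| ≤ ε
  by_cases hi : i = k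
  · subst hi
    rw [hk, min_eq_right (by linarith), add_sub_cancel_left, abs_of_pos hε]
  · rw [min_eq_left (hraise i hi), sub_self, abs_zero]
    exact hε.le

/-- **After a lowering step from an all-winners state, raises keep bids within
`ε` of the CEF set.** If all bidders are winners under `π` (each receives her
requested utility at a total-bid-maximizing outcome `ob`), bidder `k` lowers
her bid by `ε` (so her utility-target becomes `π k + ε`), and subsequently the
other bidders only raise their bids (weakly decrease their utility-targets),
then the resulting vector `π''` lies in `C_ε`: within `ℓ∞`-distance `ε` of some
vector in the CEF set. -/
theorem lower_then_raise_near_cef {I O : Type*} [Fintype I] [Fintype O] [DecidableEq I]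
    (v : I → O → ℝ) (hv : ∀ i o, 0 ≤ v i o)
    (ε : ℝ) (hε : 0 < ε)
    (π : I → ℝ) (hπ : ∀ i, 0 ≤ π i)
    (ob : O)
    (hwin : ∀ o, ∑ i, utBid v π i o ≤ ∑ i, utBid v π i ob)
    (hall : ∀ i, v i ob - utBid v π i ob = π i)
    (k : I)
    (π'' : I → ℝ) (hπ'' : ∀ i, 0 ≤ π'' i)
    (hk : π'' k = π k + ε)
    (hraise : ∀ j, j ≠ k → π'' j ≤ π j) :
    ∃ ρ : I → ℝ, InCEF v ρ ∧ ∀ i, |π'' i - ρ i| ≤ ε :=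
  lower_then_raise_near_cef_general v ε hε π ob hwin hall k π'' hk hraise
end
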